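/- arXiv:math/0302281 — 11 statements merged into one kernel-verified Lean document; each statement's English description precedes it below -/
import Mathlib

section
/- Every algebraic curvature tensor R on (V,J) satisfying Gray's first condition (G1): R(x,y,Jz,Ju) = R(x,y,z,u) for all x,y,z,u ∈ V, also satisfies Gray's second condition (G2): R(x,y,z,u) − R(Jx,Jy,z,u) = R(Jx,y,Jz,u) + R(Jx,y,z,Ju) for all x,y,z,u ∈ V. -/
open scoped InnerProductSpace

section GrayConditions

variable {K M N : Type*} [CommRing K] [AddCommGroup M] [Module K M] [AddCommGroup N] [Module K N]
  (J : M →ₗ[K] M) (R : M →ₗ[K] M →ₗ[K] M →ₗ[K] M →ₗ[K] N)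

theorem apply_map_map_left_of_pair_symm
    (hRpair : ∀ x y z u : M, R x y z u = R z u x y)
    (hG1 : ∀ x y z u : M, R x y (J z) (J u) = R x y z u) (x y z u : M) :
    R (J x) (J y) z u = R x y z u := by
  rw [hRpair, hG1, hRpair]

theorem apply_map_right_eq_neg_apply_map
    (hJJ : ∀ x : M, J (J x) = -x)
    (hG1 : ∀ x y z u : M, R x y (J z) (J u) = R x y z u) (x y z u : M) :
    R x y (J z) u = -R x y z (J u) := by
  rw [← hG1 x y (J z) u, hJJ, map_neg, LinearMap.neg_apply]

end GrayConditions

theorem gray_one_implies_gray_two_general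
    {V : Type*} [NormedAddCommGroup V] [InnerProductSpace ℝ V]
    (J : V →ₗ[ℝ] V)
    (hJJ : ∀ x : V, J (J x) = -x)
    (R : V →ₗ[ℝ] V →ₗ[ℝ] V →ₗ[ℝ] V →ₗ[ℝ] ℝ)
    (hRpair : ∀ x y z u : V, R x y z u = R z u x y)
    (hG1 : ∀ x y z u : V, R x y (J z) (J u) = R x y z u) :
    ∀ x y z u : V,
      R x y z u - R (J x) (J y) z u = R (J x) y (J z) u + R (J x) y z (J u) := by
  intro x y z u
  rw [apply_map_map_left_of_pair_symm J R hRpair hG1, apply_map_right_eq_neg_apply_map J R hJJ hG1,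
    sub_self, neg_add_cancel]

/-- An algebraic curvature tensor satisfying Gray's first condition (G1)
also satisfies Gray's second condition (G2). -/
theorem gray_one_implies_gray_two
    {V : Type*} [NormedAddCommGroup V] [InnerProductSpace ℝ V] [FiniteDimensional ℝ V]
    (J : V →ₗ[ℝ] V)
    (hJiso : ∀ x y : V, ⟪J x, J y⟫_ℝ = ⟪x, y⟫_ℝ)
    (hJJ : ∀ x : V, J (J x) = -x)
    (R : V →ₗ[ℝ] V →ₗ[ℝ] V →ₗ[ℝ] V →ₗ[ℝ] ℝ)
    (hR12 : ∀ x y z u : V, R x y z u = -R y x z u)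
    (hR34 : ∀ x y z u : V, R x y z u = -R x y u z)
    (hRpair : ∀ x y z u : V, R x y z u = R z u x y)
    (hBianchi : ∀ x y z u : V, R x y z u + R y z x u + R z x y u = 0)
    (hG1 : ∀ x y z u : V, R x y (J z) (J u) = R x y z u) :
    ∀ x y z u : V,
      R x y z u - R (J x) (J y) z u = R (J x) y (J z) u + R (J x) y z (J u) :=
  gray_one_implies_gray_two_general J hJJ R hRpair hG1
end

section
/- Every algebraic curvature tensor R on (V,J) satisfying Gray's second condition (G2): R(x,y,z,u) − R(Jx,Jy,z,u) = R(Jx,y,Jz,u) + R(Jx,y,z,Ju) for all x,y,z,u ∈ V, also satisfies Gray's third condition (G3): R(Jx,Jy,Jz,Ju) = R(x,y,z,u) for all x,y,z,u ∈ V. -/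
open scoped InnerProductSpace

/-- An algebraic curvature tensor satisfying Gray's second condition (G2)
also satisfies Gray's third condition (G3). -/
theorem gray_two_implies_gray_three
    {V : Type*} [NormedAddCommGroup V] [InnerProductSpace ℝ V] [FiniteDimensional ℝ V]
    (J : V →ₗ[ℝ] V)
    (hJiso : ∀ x y : V, ⟪J x, J y⟫_ℝ = ⟪x, y⟫_ℝ)
    (hJJ : ∀ x : V, J (J x) = -x)
    (R : V →ₗ[ℝ] V →ₗ[ℝ] V →ₗ[ℝ] V →ₗ[ℝ] ℝ)
    (hR12 : ∀ x y z u : V, R x y z u = -R y x z u)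
    (hR34 : ∀ x y z u : V, R x y z u = -R x y u z)
    (hRpair : ∀ x y z u : V, R x y z u = R z u x y)
    (hBianchi : ∀ x y z u : V, R x y z u + R y z x u + R z x y u = 0)
    (hG2 : ∀ x y z u : V,
      R x y z u - R (J x) (J y) z u = R (J x) y (J z) u + R (J x) y z (J u)) :
    ∀ x y z u : V, R (J x) (J y) (J z) (J u) = R x y z u := by
  have hE : ∀ x y z u : V, R (J x) (J y) z u = R x y (J z) (J u) := by
    intro x y z u
    have h1 := hG2 x y z u
    have h2 := hG2 (J x) (J y) z u
    have h3 := hG2 z u x y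
    have h4 := hG2 (J z) (J u) x y
    have hn : ∀ v a b c : V, R (-v) a b c = -R v a b c := by
      intro v a b c
      have h0 : R (-v) a b c + R v a b c = 0 := by
        rw [← LinearMap.add_apply, ← LinearMap.add_apply, ← LinearMap.add_apply, ← map_add,
          neg_add_cancel, map_zero, LinearMap.zero_apply, LinearMap.zero_apply, LinearMap.zero_apply]
      linarith
    simp only [hJJ, map_neg, hn, LinearMap.neg_apply, neg_neg] at h2 h4
    rw [hRpair z u x y, hRpair (J z) (J u) x y, hRpair (J z) u (J x) y,
      hRpair (J z) u x (J y)] at h3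
    rw [hRpair (J z) (J u) x y, hRpair z u x y, hRpair z (J u) (J x) y,
      hRpair z (J u) x (J y)] at h4
    linarith
  intro x y z u
  have := hE x y (J z) (J u)
  simp only [hJJ, map_neg, LinearMap.neg_apply, neg_neg] at this
  linarith
end

section
/- Let η be a quasi-Kähler torsion-type tensor on (V,J) satisfying the almost Kähler condition, and let S be an ∇̄η-type tensor on (V,J). If S(x,y)z − S(y,x)z + η_{T_x y} z = 0 for all x,y,z ∈ V, then η = 0. (Via the identity relating the Riemannian and Hermitian curvatures, the displayed hypothesis is the pointwise algebraic form of Gray's first condition (G1) with S = ∇̄η; hence this is the algebraic core of Proposition 2.1: every almost Kähler manifold satisfying (G1) is Kähler.) -/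
/-!
Fix `z` and put `E x y := η (T x y) z`. The quasi-Kähler identities make `S x` and `η`
anticommute with `J` in each slot, so `E (J x) y = J (E x y)` while `S x (J y) z = -J (S x y z)`.
Comparing (G1) at `(x, y)` with (G1) at `(J x, J y)`, after eliminating `S (J x) y z` and
`S (J y) x z` by (G1) at `(J x, y)` and `(J y, x)`, leaves `4 • E x y = 0`. The almost Kähler
condition then gives `‖T x y‖² = -⟪η (T x y) x, y⟫ = 0`, and finally
`⟪η x y, z⟫ = -⟪T y z, x⟫ = 0`.
-/

open scoped InnerProductSpace

section ComplexStructure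

variable {V F : Type*} [AddCommGroup V] [FunLike F V V] {J : F}

theorem apply_J_left_of_quasiKahler (hJJ : ∀ x, J (J x) = -x) {f : V → V → V}
    (hanti : ∀ x y, f x (J y) = -J (f x y)) (hQK : ∀ x y, f (J x) (J y) = -f x y) (x y : V) :
    f (J x) y = -J (f x y) := by
  have h : J (f (J x) y) = f x y := by rw [← neg_neg (J _), ← hanti, hQK, neg_neg]
  rw [← h, hJJ, neg_neg]

theorem eq_zero_of_sub_swap_add_eq_zero [AddMonoidHomClass F V V] [IsAddTorsionFree V]
    (hJJ : ∀ x, J (J x) = -x)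
    {B E : V → V → V} (hB : ∀ x y, B x (J y) = -J (B x y))
    (hE_swap : ∀ x y, E y x = -E x y) (hE_J : ∀ x y, E (J x) y = J (E x y))
    (h : ∀ x y, B x y - B y x + E x y = 0) (x y : V) : E x y = 0 := by
  have hEJJ : E (J x) (J y) = -E x y := by
    rw [hE_J, hE_swap, hE_J, map_neg, hJJ, neg_neg, hE_swap]
  have hBJx : B (J x) y = -J (B y x) - J (E x y) := by
    rw [← hB, ← hE_J]; linear_combination (norm := abel) h (J x) y
  have hBJy : B (J y) x = -J (B x y) + J (E x y) := by
    rw [← hB, ← neg_neg (J (E x y)), ← map_neg, ← hE_swap, ← hE_J]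
    linear_combination (norm := abel) h (J y) x
  have hBJJ : B (J x) (J y) - B (J y) (J x) = B x y - B y x - 2 • E x y := by
    rw [hB, hB, hBJx, hBJy]
    simp only [map_sub, map_add, map_neg, hJJ]
    abel
  have h4 : 4 • E x y = 0 := by
    linear_combination (norm := abel) h x y - h (J x) (J y) + hBJJ + hEJJ
  exact (nsmul_eq_zero_iff_right four_ne_zero).mp h4

end ComplexStructure

section AlmostKahler

variable {𝕜 V : Type*} [RCLike 𝕜] [NormedAddCommGroup V] [InnerProductSpace 𝕜 V]
  {η T : V → V → V}

theorem torsion_eq_zero_of_apply_torsion_eq_zero (hAK : ∀ x y z, ⟪T x y, z⟫_𝕜 = -⟪η z x, y⟫_𝕜)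
    (h : ∀ x y z, η (T x y) z = 0) (x y : V) : T x y = 0 :=
  inner_self_eq_zero.mp (by rw [hAK, h, inner_zero_left, neg_zero])

theorem eq_zero_of_torsion_eq_zero (hAK : ∀ x y z, ⟪T x y, z⟫_𝕜 = -⟪η z x, y⟫_𝕜)
    (hT : ∀ x y, T x y = 0) (x y : V) : η x y = 0 := by
  have h := hAK y (η x y) x
  rw [hT, inner_zero_left, zero_eq_neg] at h
  exact inner_self_eq_zero.mp h

end AlmostKahler

theorem eta_vanishes_of_gray_one_general
    {V : Type*} [NormedAddCommGroup V] [InnerProductSpace ℝ V]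
    (J : V →ₗ[ℝ] V)
    (hJJ : ∀ x : V, J (J x) = -x)
    (η : V →ₗ[ℝ] V →ₗ[ℝ] V)
    (hanti : ∀ x y : V, η x (J y) = -J (η x y))
    (hQK : ∀ x y : V, η (J x) (J y) = -η x y)
    (T : V → V → V) (hT : ∀ x y : V, T x y = η x y - η y x)
    (hAK : ∀ x y z : V, ⟪T x y, z⟫_ℝ = -⟪η z x, y⟫_ℝ)
    (S : V →ₗ[ℝ] V →ₗ[ℝ] V →ₗ[ℝ] V)
    (hSanti : ∀ x y z : V, S x y (J z) = -J (S x y z))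
    (hSQK : ∀ x y z : V, S x (J y) (J z) = -S x y z)
    (hG1 : ∀ x y z : V, S x y z - S y x z + η (T x y) z = 0) :
    ∀ x y : V, η x y = 0 := by
  have := IsAddTorsionFree.of_isTorsionFree ℝ V
  have hηJ := apply_J_left_of_quasiKahler hJJ hanti hQK
  have hSJ (x : V) := apply_J_left_of_quasiKahler hJJ (hSanti x) (hSQK x)
  have hTJ (x y : V) : T (J x) y = -J (T x y) := by
    rw [hT, hT, hηJ, hanti, map_sub]; abel
  have hηT (x y z : V) : η (T x y) z = 0 :=
    eq_zero_of_sub_swap_add_eq_zero hJJ (B := fun x y => S x y z)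
      (fun x y => hSJ x y z)
      (fun x y => by simp only [hT x y, hT y x, ← neg_sub (η x y), map_neg, LinearMap.neg_apply])
      (fun x y => by simp only [hTJ, map_neg, LinearMap.neg_apply, hηJ, neg_neg])
      (fun x y => hG1 x y z) x y
  exact eq_zero_of_torsion_eq_zero hAK (torsion_eq_zero_of_apply_torsion_eq_zero hAK hηT)

/-- Algebraic core of Proposition 2.1. If η is a quasi-Kähler torsion-type
tensor satisfying the almost Kähler condition and S is an ∇̄η-type tensor with
`S x y z - S y x z + η (T x y) z = 0` for all `x y z` (the pointwise form of Gray's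
condition (G1)), then `η = 0`. -/
theorem eta_vanishes_of_gray_one
    {V : Type*} [NormedAddCommGroup V] [InnerProductSpace ℝ V] [FiniteDimensional ℝ V]
    (J : V →ₗ[ℝ] V)
    (hJiso : ∀ x y : V, ⟪J x, J y⟫_ℝ = ⟪x, y⟫_ℝ)
    (hJJ : ∀ x : V, J (J x) = -x)
    (η : V →ₗ[ℝ] V →ₗ[ℝ] V)
    (hskew : ∀ x y z : V, ⟪η x y, z⟫_ℝ = -⟪y, η x z⟫_ℝ)
    (hanti : ∀ x y : V, η x (J y) = -J (η x y))
    (hQK : ∀ x y : V, η (J x) (J y) = -η x y)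
    (T : V → V → V) (hT : ∀ x y : V, T x y = η x y - η y x)
    (hAK : ∀ x y z : V, ⟪T x y, z⟫_ℝ = -⟪η z x, y⟫_ℝ)
    (S : V →ₗ[ℝ] V →ₗ[ℝ] V →ₗ[ℝ] V)
    (hSskew : ∀ x y z u : V, ⟪S x y z, u⟫_ℝ = -⟪z, S x y u⟫_ℝ)
    (hSanti : ∀ x y z : V, S x y (J z) = -J (S x y z))
    (hSQK : ∀ x y z : V, S x (J y) (J z) = -S x y z)
    (hG1 : ∀ x y z : V, S x y z - S y x z + η (T x y) z = 0) :
    ∀ x y : V, η x y = 0 :=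
  eta_vanishes_of_gray_one_general J hJJ η hanti hQK T hT hAK S hSanti hSQK hG1
end

section
/- Let R be an algebraic curvature tensor on (V,J) and D : V×V → End(V) a bilinear map such that each endomorphism D(x,y) is skew-symmetric and anticommutes with J, and such that R(x,y,z,u) − R(x,y,Jz,Ju) = 2⟨D(x,y)z, u⟩ for all x,y,z,u ∈ V. Then R satisfies Gray's third condition (G3): R(Jx,Jy,Jz,Ju) = R(x,y,z,u), if and only if ⟨D(x,y)z,u⟩ = ⟨D(z,u)x,y⟩ for all x,y,z,u ∈ V; moreover, in that case D(Jx,Jy) + D(x,y) = 0 for all x,y ∈ V. (This is the algebraic form of Lemma 3.1, with D = d_{∇̄}u the twisted differential of the torsion one-form.) -/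
open scoped InnerProductSpace

/-- Algebraic form of Lemma 3.1. If
`R x y z u - R x y (J z) (J u) = 2⟪D x y z, u⟫` with each `D x y` skew-symmetric and
J-anticommuting, then R satisfies (G3) iff `⟪D x y z, u⟫ = ⟪D z u x, y⟫`; moreover,
in that case `D (J x) (J y) + D x y = 0`. -/
theorem gray_three_iff_D_symmetric
    {V : Type*} [NormedAddCommGroup V] [InnerProductSpace ℝ V] [FiniteDimensional ℝ V]
    (J : V →ₗ[ℝ] V)
    (hJiso : ∀ x y : V, ⟪J x, J y⟫_ℝ = ⟪x, y⟫_ℝ)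
    (hJJ : ∀ x : V, J (J x) = -x)
    (R : V →ₗ[ℝ] V →ₗ[ℝ] V →ₗ[ℝ] V →ₗ[ℝ] ℝ)
    (hR12 : ∀ x y z u : V, R x y z u = -R y x z u)
    (hR34 : ∀ x y z u : V, R x y z u = -R x y u z)
    (hRpair : ∀ x y z u : V, R x y z u = R z u x y)
    (hBianchi : ∀ x y z u : V, R x y z u + R y z x u + R z x y u = 0)
    (D : V →ₗ[ℝ] V →ₗ[ℝ] V →ₗ[ℝ] V)
    (hDskew : ∀ x y z u : V, ⟪D x y z, u⟫_ℝ = -⟪z, D x y u⟫_ℝ)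
    (hDanti : ∀ x y z : V, D x y (J z) = -J (D x y z))
    (hRD : ∀ x y z u : V, R x y z u - R x y (J z) (J u) = 2 * ⟪D x y z, u⟫_ℝ) :
    ((∀ x y z u : V, R (J x) (J y) (J z) (J u) = R x y z u) ↔
      (∀ x y z u : V, ⟪D x y z, u⟫_ℝ = ⟪D z u x, y⟫_ℝ)) ∧
    ((∀ x y z u : V, R (J x) (J y) (J z) (J u) = R x y z u) →
      ∀ x y : V, D (J x) (J y) + D x y = 0) := by
  have h1 : (∀ x y z u : V, R (J x) (J y) (J z) (J u) = R x y z u) →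
      ∀ x y z u : V, R x y (J z) (J u) = R (J x) (J y) z u := by
    intro hG3 x y z u
    have := hG3 (J x) (J y) z u
    have hneg : ∀ w, R (-x) w (J z) (J u) = -R x w (J z) (J u) := by
      intro w
      have h0 : R (-x) + R x = 0 := by rw [← map_add, neg_add_cancel, map_zero]
      have h0' := congrArg (fun f => f w (J z) (J u)) h0
      simp only [LinearMap.add_apply, LinearMap.zero_apply] at h0'
      linarith
    simp [hJJ, map_neg, neg_neg] at this
    rw [hneg, neg_neg] at this
    exact this
  have fwd : (∀ x y z u : V, R (J x) (J y) (J z) (J u) = R x y z u) →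
      ∀ x y z u : V, ⟪D x y z, u⟫_ℝ = ⟪D z u x, y⟫_ℝ := by
    intro hG3 x y z u
    have e1 := hRD x y z u
    have e2 := hRD z u x y
    rw [hRpair z u x y, hRpair z u (J x) (J y), ← h1 hG3 x y z u] at e2
    linarith
  refine ⟨⟨fwd, ?_⟩, ?_⟩
  · intro hS x y z u
    have hA : ∀ x y z u : V, R (J x) (J y) z u = R x y (J z) (J u) := by
      intro x y z u
      have e1 := hRD x y z u
      have e2 := hRD z u x y
      rw [hRpair z u x y, hRpair z u (J x) (J y)] at e2
      have hs := hS x y z u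
      linarith
    have := hA x y (J z) (J u)
    simpa [hJJ, map_neg, neg_neg] using this
  · intro hG3 x y
    ext z
    have hz : ∀ u : V, ⟪(D (J x) (J y) + D x y) z, u⟫_ℝ = 0 := by
      intro u
      have e1 := hRD (J x) (J y) z u
      have e2 := hRD x y z u
      rw [hG3 x y z u, ← h1 hG3 x y z u] at e1
      have : ⟪D (J x) (J y) z, u⟫_ℝ + ⟪D x y z, u⟫_ℝ = 0 := by linarith
      simpa [inner_add_left] using this
    have := ext_inner_right ℝ (x := (D (J x) (J y) + D x y) z) (y := (0 : V))
      (fun u => by simpa using hz u)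
    simpa using this
end

section
/- Let R be an algebraic curvature tensor on (V,J), η a quasi-Kähler torsion-type tensor on (V,J), and D : V×V → End(V) a bilinear map such that each D(x,y) is skew-symmetric and anticommutes with J, satisfying R(x,y,z,u) − R(x,y,Jz,Ju) = 2⟨D(x,y)z,u⟩ and the symmetry ⟨D(x,y)z,u⟩ = ⟨D(z,u)x,y⟩ for all x,y,z,u ∈ V. Define R̄(x,y,z,u) := R(x,y,z,u) + ⟨[η_x, η_y]z, u⟩ − ⟨D(x,y)z, u⟩. Then for all x,y,z,u ∈ V: (i) R̄(x,y,z,u) − R̄(z,u,x,y) = ⟨[η_x, η_y]z, u⟩ − ⟨[η_z, η_u]x, y⟩; (ii) R̄(Jx,Jy,z,u) = R̄(x,y,z,u). (This is the algebraic form of Corollary 3.1 for quasi-Kähler manifolds in the class AH₃, R̄ being the curvature of the first canonical Hermitian connection.) -/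
/-!
Pair symmetry of `R` and of `⟪D · · ·, ·⟫` gives (i) at once. For (ii), the quasi-Kähler
condition lets `J` pass from the index of `η` to its argument, where it is absorbed because
`η_x` anticommutes with `J`; hence `[η_{Jx}, η_{Jy}] = [η_x, η_y]`. Reading
`R - R(·,·,J·,J·) = 2⟪D·,·⟫` in the first pair via pair symmetry, `R(Jx,Jy,z,u)`
drops by `2⟪D(x,y)z,u⟫`, while `⟪D(Jx,Jy)z,u⟫ = -⟪D(x,y)z,u⟫`, so the two changes cancel in `R̄`.
-/

open scoped InnerProductSpace

section ComplexStructure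

variable {𝕜 M N : Type*} [CommRing 𝕜] [AddCommGroup M] [Module 𝕜 M] [AddCommGroup N]
  [Module 𝕜 N] {J : M →ₗ[𝕜] M}

theorem apply_J_left_eq_apply_J_right_of_quasiKahler (hJJ : ∀ x, J (J x) = -x)
    {η : M →ₗ[𝕜] M →ₗ[𝕜] N} (hQK : ∀ x y, η (J x) (J y) = -η x y) (x w : M) :
    η (J x) w = η x (J w) := by
  simpa only [hJJ, map_neg, neg_inj] using hQK x (J w)

theorem J_apply_apply_J_of_anticomm (hJJ : ∀ x, J (J x) = -x)
    {η : M →ₗ[𝕜] M →ₗ[𝕜] M} (hanti : ∀ x y, η x (J y) = -J (η x y)) (x w : M) :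
    J (η x (J w)) = η x w := by
  simpa only [hJJ, map_neg, neg_inj] using (hanti x (J w)).symm

theorem apply_J_comp_apply_J_of_quasiKahler (hJJ : ∀ x, J (J x) = -x)
    {η : M →ₗ[𝕜] M →ₗ[𝕜] M} (hanti : ∀ x y, η x (J y) = -J (η x y))
    (hQK : ∀ x y, η (J x) (J y) = -η x y) (x y z : M) :
    η (J x) (η (J y) z) = η x (η y z) := by
  rw [apply_J_left_eq_apply_J_right_of_quasiKahler hJJ hQK,
    apply_J_left_eq_apply_J_right_of_quasiKahler hJJ hQK y,
    J_apply_apply_J_of_anticomm hJJ hanti]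

end ComplexStructure

section CurvatureForm

variable {𝕜 M : Type*} [CommRing 𝕜] [AddCommGroup M] [Module 𝕜 M] {J : M →ₗ[𝕜] M}
  {R : M →ₗ[𝕜] M →ₗ[𝕜] M →ₗ[𝕜] M →ₗ[𝕜] 𝕜} {d : M → M → M → M → 𝕜}

theorem curvature_apply_J_J_eq_sub_two_mul (hRpair : ∀ x y z u, R x y z u = R z u x y)
    (hRd : ∀ x y z u, R x y z u - R x y (J z) (J u) = 2 * d x y z u)
    (hdsym : ∀ x y z u, d x y z u = d z u x y) (x y z u : M) :
    R (J x) (J y) z u = R x y z u - 2 * d x y z u := by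
  rw [hRpair (J x), hRpair x, hdsym x, ← hRd]
  ring

theorem form_apply_J_J_eq_neg [NoZeroDivisors 𝕜] [NeZero (2 : 𝕜)] (hJJ : ∀ x, J (J x) = -x)
    (hRd : ∀ x y z u, R x y z u - R x y (J z) (J u) = 2 * d x y z u)
    (hdsym : ∀ x y z u, d x y z u = d z u x y) (x y z u : M) :
    d (J x) (J y) z u = -d x y z u := by
  have hRJ := hRd z u (J x) (J y)
  simp only [hJJ, map_neg, LinearMap.neg_apply, neg_neg] at hRJ
  have hsum : 2 * (d (J x) (J y) z u + d x y z u) = 0 := by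
    rw [hdsym (J x), hdsym x]
    linear_combination -(hRJ + hRd z u x y)
  exact eq_neg_of_add_eq_zero_left ((mul_eq_zero.1 hsum).resolve_left two_ne_zero)

end CurvatureForm

theorem hermitian_curvature_symmetries_general
    {V : Type*} [NormedAddCommGroup V] [InnerProductSpace ℝ V]
    (J : V →ₗ[ℝ] V)
    (hJJ : ∀ x : V, J (J x) = -x)
    (R : V →ₗ[ℝ] V →ₗ[ℝ] V →ₗ[ℝ] V →ₗ[ℝ] ℝ)
    (hRpair : ∀ x y z u : V, R x y z u = R z u x y)
    (η : V →ₗ[ℝ] V →ₗ[ℝ] V)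
    (hanti : ∀ x y : V, η x (J y) = -J (η x y))
    (hQK : ∀ x y : V, η (J x) (J y) = -η x y)
    (D : V →ₗ[ℝ] V →ₗ[ℝ] V →ₗ[ℝ] V)
    (hRD : ∀ x y z u : V, R x y z u - R x y (J z) (J u) = 2 * ⟪D x y z, u⟫_ℝ)
    (hDsym : ∀ x y z u : V, ⟪D x y z, u⟫_ℝ = ⟪D z u x, y⟫_ℝ)
    (Rbar : V → V → V → V → ℝ)
    (hRbar : ∀ x y z u : V,
      Rbar x y z u = R x y z u + ⟪η x (η y z) - η y (η x z), u⟫_ℝ - ⟪D x y z, u⟫_ℝ) :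
    (∀ x y z u : V,
      Rbar x y z u - Rbar z u x y =
        ⟪η x (η y z) - η y (η x z), u⟫_ℝ - ⟪η z (η u x) - η u (η z x), y⟫_ℝ) ∧
    (∀ x y z u : V, Rbar (J x) (J y) z u = Rbar x y z u) := by
  refine ⟨fun x y z u => ?_, fun x y z u => ?_⟩
  · rw [hRbar, hRbar, hRpair x, hDsym x]
    ring
  · have hcomm := apply_J_comp_apply_J_of_quasiKahler hJJ hanti hQK
    rw [hRbar, hRbar, hcomm, hcomm, curvature_apply_J_J_eq_sub_two_mul hRpair hRD hDsym,
      form_apply_J_J_eq_neg (d := fun x y z u => ⟪D x y z, u⟫_ℝ) hJJ hRD hDsym]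
    ring

/-- Algebraic form of Corollary 3.1. With
`R̄ x y z u = R x y z u + ⟪[η_x, η_y] z, u⟫ - ⟪D x y z, u⟫`, one has
(i) `R̄ x y z u - R̄ z u x y = ⟪[η_x, η_y] z, u⟫ - ⟪[η_z, η_u] x, y⟫` and
(ii) `R̄ (J x) (J y) z u = R̄ x y z u`. -/
theorem hermitian_curvature_symmetries
    {V : Type*} [NormedAddCommGroup V] [InnerProductSpace ℝ V] [FiniteDimensional ℝ V]
    (J : V →ₗ[ℝ] V)
    (hJiso : ∀ x y : V, ⟪J x, J y⟫_ℝ = ⟪x, y⟫_ℝ)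
    (hJJ : ∀ x : V, J (J x) = -x)
    (R : V →ₗ[ℝ] V →ₗ[ℝ] V →ₗ[ℝ] V →ₗ[ℝ] ℝ)
    (hR12 : ∀ x y z u : V, R x y z u = -R y x z u)
    (hR34 : ∀ x y z u : V, R x y z u = -R x y u z)
    (hRpair : ∀ x y z u : V, R x y z u = R z u x y)
    (hBianchi : ∀ x y z u : V, R x y z u + R y z x u + R z x y u = 0)
    (η : V →ₗ[ℝ] V →ₗ[ℝ] V)
    (hskew : ∀ x y z : V, ⟪η x y, z⟫_ℝ = -⟪y, η x z⟫_ℝ)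
    (hanti : ∀ x y : V, η x (J y) = -J (η x y))
    (hQK : ∀ x y : V, η (J x) (J y) = -η x y)
    (D : V →ₗ[ℝ] V →ₗ[ℝ] V →ₗ[ℝ] V)
    (hDskew : ∀ x y z u : V, ⟪D x y z, u⟫_ℝ = -⟪z, D x y u⟫_ℝ)
    (hDanti : ∀ x y z : V, D x y (J z) = -J (D x y z))
    (hRD : ∀ x y z u : V, R x y z u - R x y (J z) (J u) = 2 * ⟪D x y z, u⟫_ℝ)
    (hDsym : ∀ x y z u : V, ⟪D x y z, u⟫_ℝ = ⟪D z u x, y⟫_ℝ)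
    (Rbar : V → V → V → V → ℝ)
    (hRbar : ∀ x y z u : V,
      Rbar x y z u = R x y z u + ⟪η x (η y z) - η y (η x z), u⟫_ℝ - ⟪D x y z, u⟫_ℝ) :
    (∀ x y z u : V,
      Rbar x y z u - Rbar z u x y =
        ⟪η x (η y z) - η y (η x z), u⟫_ℝ - ⟪η z (η u x) - η u (η z x), y⟫_ℝ) ∧
    (∀ x y z u : V, Rbar (J x) (J y) z u = Rbar x y z u) :=
  hermitian_curvature_symmetries_general J hJJ R hRpair η hanti hQK D hRD hDsym Rbar hRbar
end

section
/- Let η be a quasi-Kähler torsion-type tensor on (V,J) and S an ∇̄η-type tensor on (V,J) satisfying the symmetry condition (3.1): ⟨S(x,y)z − S(y,x)z + η_{T_x y} z, u⟩ = ⟨S(z,u)x − S(u,z)x + η_{T_z u} x, y⟩ for all x,y,z,u ∈ V. Then: (i) S(Jx,Jy)z + S(x,y)z = 0 for all x,y,z ∈ V; and (ii) ⟨η_{T_x y} z, w⟩ = ⟨η_{T_z w} x, y⟩ for all x,y,z,w ∈ V. (This is the algebraic form of Proposition 3.1 for quasi-Kähler manifolds satisfying Gray's condition (G3), with S = ∇̄η.)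 -/
/-!
Put `P(x, y) := S(Jx, Jy)z + S(x, y)z` for fixed `z`. Applying (3.1) to `(z, u, Jx, Jy)` and
comparing with (3.1) at `(x, y, z, u)` shows that `P` is symmetric: the `η`-terms cancel because
`T_{Jx} Jy = -T_x y`. Since `S(x, Jy) = -J S(x, y)`, `P` is `J`-linear in its first and
`J`-antilinear in its second argument, so `J P(x, y) = P(Jx, y) = P(y, Jx) = -J P(x, y)` and `P = 0`.
This gives `S(Jx, y)(Jz) = -S(x, y)z`, and then (3.1) at `(Jx, y, Jz, u)` added to (3.1) at
`(x, y, z, u)` cancels every `S`-term, leaving (ii).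
-/

open scoped InnerProductSpace

theorem apply_J_left_eq_neg_J_apply {V : Type*} [AddCommGroup V] (J : V → V)
    (hJJ : ∀ x, J (J x) = -x) (B : V → V → V) (hanti : ∀ x y, B x (J y) = -J (B x y))
    (hQK : ∀ x y, B (J x) (J y) = -B x y) (x y : V) : B (J x) y = -J (B x y) := by
  have h : B x y = J (B (J x) y) := neg_injective (by rw [← hanti, hQK])
  rw [h, hJJ, neg_neg]

theorem eq_zero_of_symmetric_of_J_linear_of_J_antilinear {V : Type*} [AddCommGroup V]
    [Module ℝ V] (J : V →ₗ[ℝ] V) (hJJ : ∀ x, J (J x) = -x) (P : V → V → V)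
    (hsymm : ∀ x y, P x y = P y x) (hleft : ∀ x y, P (J x) y = J (P x y))
    (hright : ∀ x y, P x (J y) = -J (P x y)) (x y : V) : P x y = 0 := by
  have h := hleft x y
  rw [hsymm, hright, hsymm] at h
  have hJP : J (P x y) = 0 := by linear_combination (norm := module) (-1 / 2 : ℝ) • h
  have hJJP := hJJ (P x y)
  rw [hJP, map_zero, eq_comm, neg_eq_zero] at hJJP
  exact hJJP

theorem inner_apply_J_J_of_anticomm {V : Type*} [NormedAddCommGroup V] [InnerProductSpace ℝ V]
    (J : V →ₗ[ℝ] V) (hJiso : ∀ x y : V, ⟪J x, J y⟫_ℝ = ⟪x, y⟫_ℝ) (f : V → V)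
    (hf : ∀ x, f (J x) = -J (f x)) (x y : V) : ⟪f (J x), J y⟫_ℝ = -⟪f x, y⟫_ℝ := by
  rw [hf, inner_neg_left, hJiso]

section QuasiKahler

variable {V : Type*} [NormedAddCommGroup V] [InnerProductSpace ℝ V] (J : V →ₗ[ℝ] V)
  (η : V →ₗ[ℝ] V →ₗ[ℝ] V) (T : V → V → V) (S : V →ₗ[ℝ] V →ₗ[ℝ] V →ₗ[ℝ] V)

theorem nablaEta_J_J_add_comm (hJiso : ∀ x y : V, ⟪J x, J y⟫_ℝ = ⟪x, y⟫_ℝ)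
    (hanti : ∀ x y : V, η x (J y) = -J (η x y)) (hQK : ∀ x y : V, η (J x) (J y) = -η x y)
    (hT : ∀ x y : V, T x y = η x y - η y x) (hSanti : ∀ x y z : V, S x y (J z) = -J (S x y z))
    (hsym : ∀ x y z u : V,
      ⟪S x y z - S y x z + η (T x y) z, u⟫_ℝ = ⟪S z u x - S u z x + η (T z u) x, y⟫_ℝ)
    (x y z : V) : S (J x) (J y) z + S x y z = S (J y) (J x) z + S y x z := by
  have hTJJ : T (J x) (J y) = -T x y := by
    rw [hT, hT, hQK, hQK]
    abel
  refine ext_inner_right ℝ fun u => ?_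
  have hanti_zu : ∀ c, S z u (J c) - S u z (J c) + η (T z u) (J c) =
      -J (S z u c - S u z c + η (T z u) c) := by
    intro c
    rw [hSanti, hSanti, hanti, map_add, map_sub]
    abel
  have h₁ := hsym x y z u
  have h₂ := hsym z u (J x) (J y)
  rw [inner_apply_J_J_of_anticomm J hJiso (fun c => S z u c - S u z c + η (T z u) c) hanti_zu,
    ← h₁, hTJJ] at h₂
  simp only [inner_add_left, inner_sub_left, map_neg, LinearMap.neg_apply, inner_neg_left] at h₂ ⊢
  linarith

theorem nablaEta_J_J_add_eq_zero (hJiso : ∀ x y : V, ⟪J x, J y⟫_ℝ = ⟪x, y⟫_ℝ)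
    (hJJ : ∀ x : V, J (J x) = -x) (hanti : ∀ x y : V, η x (J y) = -J (η x y))
    (hQK : ∀ x y : V, η (J x) (J y) = -η x y) (hT : ∀ x y : V, T x y = η x y - η y x)
    (hSanti : ∀ x y z : V, S x y (J z) = -J (S x y z))
    (hSQK : ∀ x y z : V, S x (J y) (J z) = -S x y z)
    (hsym : ∀ x y z u : V,
      ⟪S x y z - S y x z + η (T x y) z, u⟫_ℝ = ⟪S z u x - S u z x + η (T z u) x, y⟫_ℝ)
    (x y z : V) : S (J x) (J y) z + S x y z = 0 := by
  have hS₂ (x y : V) : S x (J y) z = -J (S x y z) :=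
    apply_J_left_eq_neg_J_apply J hJJ (fun y z => S x y z) (hSanti x) (hSQK x) y z
  have hS₂' (x y : V) : S x y z = J (S x (J y) z) := by
    rw [← neg_inj, ← hS₂, hJJ, map_neg, LinearMap.neg_apply]
  refine eq_zero_of_symmetric_of_J_linear_of_J_antilinear J hJJ
    (fun x y => S (J x) (J y) z + S x y z)
    (nablaEta_J_J_add_comm J η T S hJiso hanti hQK hT hSanti hsym · · z) (fun x y => ?_)
    (fun x y => ?_) x y
  · rw [hJJ, map_neg, LinearMap.neg_apply, LinearMap.neg_apply, hS₂, hS₂' (J x) y, map_add]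
    abel
  · rw [hJJ, map_neg, LinearMap.neg_apply, hS₂, hS₂' (J x) y, map_add]
    abel

theorem inner_eta_torsion_comm (hJJ : ∀ x : V, J (J x) = -x)
    (hanti : ∀ x y : V, η x (J y) = -J (η x y)) (hQK : ∀ x y : V, η (J x) (J y) = -η x y)
    (hT : ∀ x y : V, T x y = η x y - η y x)
    (hSQK : ∀ x y z : V, S x (J y) (J z) = -S x y z)
    (hsym : ∀ x y z u : V,
      ⟪S x y z - S y x z + η (T x y) z, u⟫_ℝ = ⟪S z u x - S u z x + η (T z u) x, y⟫_ℝ)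
    (hS : ∀ x y z : V, S (J x) (J y) z + S x y z = 0) (x y z w : V) :
    ⟪η (T x y) z, w⟫_ℝ = ⟪η (T z w) x, y⟫_ℝ := by
  have hη₁ := apply_J_left_eq_neg_J_apply J hJJ (fun x y => η x y) hanti hQK
  have hS₁ (x y z : V) : S (J x) y (J z) = -S x y z := by
    have h := hS x (-J y) (J z)
    rw [map_neg, hJJ, neg_neg, map_neg, LinearMap.neg_apply, ← eq_neg_iff_add_eq_zero,
      neg_neg] at h
    rw [h, hSQK]
  have hηT (x y z : V) : η (T (J x) y) (J z) = η (T x y) z := by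
    have hTJ : T (J x) y = -J (T x y) := by
      rw [hT, hT, hη₁, hanti, map_sub]
      abel
    rw [hTJ, map_neg, LinearMap.neg_apply, hQK, neg_neg]
  have h₁ := hsym x y z w
  have h₂ := hsym (J x) y (J z) w
  rw [hS₁, hSQK, hηT, hS₁, hSQK, hηT] at h₂
  simp only [inner_add_left, inner_sub_left, inner_neg_left] at h₁ h₂
  linarith

end QuasiKahler

theorem nabla_eta_antiinvariance_and_torsion_symmetry_general
    {V : Type*} [NormedAddCommGroup V] [InnerProductSpace ℝ V]
    (J : V →ₗ[ℝ] V)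
    (hJiso : ∀ x y : V, ⟪J x, J y⟫_ℝ = ⟪x, y⟫_ℝ)
    (hJJ : ∀ x : V, J (J x) = -x)
    (η : V →ₗ[ℝ] V →ₗ[ℝ] V)
    (hanti : ∀ x y : V, η x (J y) = -J (η x y))
    (hQK : ∀ x y : V, η (J x) (J y) = -η x y)
    (T : V → V → V) (hT : ∀ x y : V, T x y = η x y - η y x)
    (S : V →ₗ[ℝ] V →ₗ[ℝ] V →ₗ[ℝ] V)
    (hSanti : ∀ x y z : V, S x y (J z) = -J (S x y z))
    (hSQK : ∀ x y z : V, S x (J y) (J z) = -S x y z)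
    (hsym : ∀ x y z u : V,
      ⟪S x y z - S y x z + η (T x y) z, u⟫_ℝ =
        ⟪S z u x - S u z x + η (T z u) x, y⟫_ℝ) :
    (∀ x y z : V, S (J x) (J y) z + S x y z = 0) ∧
    (∀ x y z w : V, ⟪η (T x y) z, w⟫_ℝ = ⟪η (T z w) x, y⟫_ℝ) := by
  have hS := nablaEta_J_J_add_eq_zero J η T S hJiso hJJ hanti hQK hT hSanti hSQK hsym
  exact ⟨hS, inner_eta_torsion_comm J η T S hJJ hanti hQK hT hSQK hsym hS⟩

/-- Algebraic form of Proposition 3.1. If η is a quasi-Kähler torsion-type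
tensor and S an ∇̄η-type tensor satisfying the symmetry (3.1), then
(i) `S (J x) (J y) z + S x y z = 0` and (ii) `⟪η (T x y) z, w⟫ = ⟪η (T z w) x, y⟫`. -/
theorem nabla_eta_antiinvariance_and_torsion_symmetry
    {V : Type*} [NormedAddCommGroup V] [InnerProductSpace ℝ V] [FiniteDimensional ℝ V]
    (J : V →ₗ[ℝ] V)
    (hJiso : ∀ x y : V, ⟪J x, J y⟫_ℝ = ⟪x, y⟫_ℝ)
    (hJJ : ∀ x : V, J (J x) = -x)
    (η : V →ₗ[ℝ] V →ₗ[ℝ] V)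
    (hskew : ∀ x y z : V, ⟪η x y, z⟫_ℝ = -⟪y, η x z⟫_ℝ)
    (hanti : ∀ x y : V, η x (J y) = -J (η x y))
    (hQK : ∀ x y : V, η (J x) (J y) = -η x y)
    (T : V → V → V) (hT : ∀ x y : V, T x y = η x y - η y x)
    (S : V →ₗ[ℝ] V →ₗ[ℝ] V →ₗ[ℝ] V)
    (hSskew : ∀ x y z u : V, ⟪S x y z, u⟫_ℝ = -⟪z, S x y u⟫_ℝ)
    (hSanti : ∀ x y z : V, S x y (J z) = -J (S x y z))
    (hSQK : ∀ x y z : V, S x (J y) (J z) = -S x y z)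
    (hsym : ∀ x y z u : V,
      ⟪S x y z - S y x z + η (T x y) z, u⟫_ℝ =
        ⟪S z u x - S u z x + η (T z u) x, y⟫_ℝ) :
    (∀ x y z : V, S (J x) (J y) z + S x y z = 0) ∧
    (∀ x y z w : V, ⟪η (T x y) z, w⟫_ℝ = ⟪η (T z w) x, y⟫_ℝ) :=
  nabla_eta_antiinvariance_and_torsion_symmetry_general J hJiso hJJ η hanti hQK T hT S hSanti hSQK
    hsym
end

section
/- Let η be a quasi-Kähler torsion-type tensor on (V,J) satisfying the almost Kähler condition, and let S be an ∇̄η-type tensor on (V,J) such that in addition, for every fixed x ∈ V, the bilinear map (y,z) ↦ S(x,y)z satisfies the almost Kähler condition (⟨S(x,y)z − S(x,z)y, u⟩ = −⟨S(x,u)y, z⟩ for all y,z,u), and such that S satisfies the symmetry condition (3.1): ⟨S(x,y)z − S(y,x)z + η_{T_x y} z, u⟩ = ⟨S(z,u)x − S(u,z)x + η_{T_z u} x, y⟩ for all x,y,z,u ∈ V. Then the cyclic sum σ_{x,y,z}[S(x,y)z − S(x,z)y] = 0; consequently, any trilinear map R̄ : V×V×V → V satisfying the first Bianchi identity with torsion,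 σ_{x,y,z} R̄(x,y)z = −σ_{x,y,z}[(S(x,y)z − S(x,z)y) + T_{T_x y} z], satisfies σ_{x,y,z}[R̄(x,y)z + T_{T_x y} z] = 0. (This is the algebraic form of Lemma 3.2, with S = ∇̄T's building tensor ∇̄η and R̄ the Hermitian curvature with the sign convention R̄(X,Y) = −[∇̄_X,∇̄_Y] + ∇̄_{[X,Y]}.) -/
open scoped InnerProductSpace

/-!
Write `s(x,y,z,u) = ⟪S(x,y)z, u⟫`. The almost Kähler condition for `S` turns the cyclic sum
`σ_{x,y,z} s(x,y,z,u) - s(x,z,y,u)` into `-σ_{x,y,z} s(x,u,y,z)`. The symmetry condition (3.1),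
whose `η`-terms become `-⟪T z u, T x y⟫` and `-⟪T x y, T z u⟫` by the almost Kähler condition
for `η` and cancel, says that `s(x,y,z,u) - s(y,x,z,u)` is symmetric under exchanging the pairs
`(x,y)` and `(z,u)`. This rewrites the same cyclic sum as `+σ_{x,y,z} s(x,u,y,z)` minus a cyclic
sum over the last three slots of `s(u,·,·,·)`, which vanishes. So the cyclic sum is its own
negative.
-/

theorem cyclic_sum_sub_eq_zero_of_pair_symm {α R : Type*} [Field R] [CharZero R]
    (s : α → α → α → α → R)
    (hskew : ∀ a b c d, s a b c d = -s a b d c)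
    (hAK : ∀ a b c d, s a b c d - s a c b d = -s a d b c)
    (hpair : ∀ a b c d, s a b c d - s b a c d = s c d a b - s d c a b) (x y z u : α) :
    (s x y z u - s x z y u) + (s y z x u - s y x z u) + (s z x y u - s z y x u) = 0 := by
  have hbianchi : s u z x y + s u x y z + s u y z x = 0 := by
    linear_combination hAK u z x y + hskew u x z y
  linear_combination (1 / 2 : R) * (hpair x y z u + hpair y z x u + hpair z x y u - hbianchi
    + hAK x y z u + hAK y z x u + hAK z x y u)

section InnerProductSpace

variable {V : Type*} [NormedAddCommGroup V] [InnerProductSpace ℝ V]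
  (η : V → V → V) (T : V → V → V) (S : V → V → V → V)

theorem inner_sub_swap_pair_symm (hAK : ∀ x y z : V, ⟪T x y, z⟫_ℝ = -⟪η z x, y⟫_ℝ)
    (hsym : ∀ x y z u : V,
      ⟪S x y z - S y x z + η (T x y) z, u⟫_ℝ = ⟪S z u x - S u z x + η (T z u) x, y⟫_ℝ)
    (a b c d : V) :
    ⟪S a b c, d⟫_ℝ - ⟪S b a c, d⟫_ℝ = ⟪S c d a, b⟫_ℝ - ⟪S d c a, b⟫_ℝ := by
  have h := hsym a b c d
  rw [inner_add_left, inner_add_left, inner_sub_left, inner_sub_left] at h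
  linarith [hAK c d (T a b), hAK a b (T c d), real_inner_comm (T a b) (T c d)]

theorem cyclic_sum_sub_eq_zero (hAK : ∀ x y z : V, ⟪T x y, z⟫_ℝ = -⟪η z x, y⟫_ℝ)
    (hSskew : ∀ x y z u : V, ⟪S x y z, u⟫_ℝ = -⟪z, S x y u⟫_ℝ)
    (hSAK : ∀ x y z u : V, ⟪S x y z - S x z y, u⟫_ℝ = -⟪S x u y, z⟫_ℝ)
    (hsym : ∀ x y z u : V,
      ⟪S x y z - S y x z + η (T x y) z, u⟫_ℝ = ⟪S z u x - S u z x + η (T z u) x, y⟫_ℝ)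
    (x y z : V) :
    (S x y z - S x z y) + (S y z x - S y x z) + (S z x y - S z y x) = 0 := by
  refine ext_inner_right ℝ fun u => ?_
  simp only [inner_add_left, inner_sub_left, inner_zero_left]
  refine cyclic_sum_sub_eq_zero_of_pair_symm (fun a b c d => ⟪S a b c, d⟫_ℝ)
    (fun a b c d => ?_) (fun a b c d => ?_) (inner_sub_swap_pair_symm η T S hAK hsym) x y z u
  · rw [hSskew, real_inner_comm]
  · rw [← inner_sub_left, hSAK]

end InnerProductSpace

theorem simplified_first_bianchi_general
    {V : Type*} [NormedAddCommGroup V] [InnerProductSpace ℝ V]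
    (η : V →ₗ[ℝ] V →ₗ[ℝ] V)
    (T : V → V → V)
    (hAK : ∀ x y z : V, ⟪T x y, z⟫_ℝ = -⟪η z x, y⟫_ℝ)
    (S : V →ₗ[ℝ] V →ₗ[ℝ] V →ₗ[ℝ] V)
    (hSskew : ∀ x y z u : V, ⟪S x y z, u⟫_ℝ = -⟪z, S x y u⟫_ℝ)
    (hSAK : ∀ x y z u : V, ⟪S x y z - S x z y, u⟫_ℝ = -⟪S x u y, z⟫_ℝ)
    (hsym : ∀ x y z u : V,
      ⟪S x y z - S y x z + η (T x y) z, u⟫_ℝ =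
        ⟪S z u x - S u z x + η (T z u) x, y⟫_ℝ) :
    (∀ x y z : V,
      (S x y z - S x z y) + (S y z x - S y x z) + (S z x y - S z y x) = 0) ∧
    (∀ Rbar : V →ₗ[ℝ] V →ₗ[ℝ] V →ₗ[ℝ] V,
      (∀ x y z : V,
        Rbar x y z + Rbar y z x + Rbar z x y =
          -(((S x y z - S x z y) + T (T x y) z) +
            ((S y z x - S y x z) + T (T y z) x) +
            ((S z x y - S z y x) + T (T z x) y))) →
      ∀ x y z : V,
        (Rbar x y z + T (T x y) z) + (Rbar y z x + T (T y z) x) +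
          (Rbar z x y + T (T z x) y) = 0) := by
  have hcyc := cyclic_sum_sub_eq_zero (fun a b => η a b) T (fun a b c => S a b c)
    hAK hSskew hSAK hsym
  exact ⟨hcyc, fun Rbar hR x y z => by linear_combination (norm := abel) hR x y z - hcyc x y z⟩

/-- Algebraic form of Lemma 3.2. Under the stated conditions on η and S,
the cyclic sum `σ_{x,y,z} [S x y z - S x z y]` vanishes; consequently any trilinear R̄
with `σ R̄(x,y)z = -σ[(S x y z - S x z y) + T (T x y) z]` satisfies the simplified
first Bianchi identity `σ [R̄(x,y)z + T (T x y) z] = 0`. -/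
theorem simplified_first_bianchi
    {V : Type*} [NormedAddCommGroup V] [InnerProductSpace ℝ V] [FiniteDimensional ℝ V]
    (J : V →ₗ[ℝ] V)
    (hJiso : ∀ x y : V, ⟪J x, J y⟫_ℝ = ⟪x, y⟫_ℝ)
    (hJJ : ∀ x : V, J (J x) = -x)
    (η : V →ₗ[ℝ] V →ₗ[ℝ] V)
    (hskew : ∀ x y z : V, ⟪η x y, z⟫_ℝ = -⟪y, η x z⟫_ℝ)
    (hanti : ∀ x y : V, η x (J y) = -J (η x y))
    (hQK : ∀ x y : V, η (J x) (J y) = -η x y)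
    (T : V → V → V) (hT : ∀ x y : V, T x y = η x y - η y x)
    (hAK : ∀ x y z : V, ⟪T x y, z⟫_ℝ = -⟪η z x, y⟫_ℝ)
    (S : V →ₗ[ℝ] V →ₗ[ℝ] V →ₗ[ℝ] V)
    (hSskew : ∀ x y z u : V, ⟪S x y z, u⟫_ℝ = -⟪z, S x y u⟫_ℝ)
    (hSanti : ∀ x y z : V, S x y (J z) = -J (S x y z))
    (hSQK : ∀ x y z : V, S x (J y) (J z) = -S x y z)
    (hSAK : ∀ x y z u : V, ⟪S x y z - S x z y, u⟫_ℝ = -⟪S x u y, z⟫_ℝ)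
    (hsym : ∀ x y z u : V,
      ⟪S x y z - S y x z + η (T x y) z, u⟫_ℝ =
        ⟪S z u x - S u z x + η (T z u) x, y⟫_ℝ) :
    (∀ x y z : V,
      (S x y z - S x z y) + (S y z x - S y x z) + (S z x y - S z y x) = 0) ∧
    (∀ Rbar : V →ₗ[ℝ] V →ₗ[ℝ] V →ₗ[ℝ] V,
      (∀ x y z : V,
        Rbar x y z + Rbar y z x + Rbar z x y =
          -(((S x y z - S x z y) + T (T x y) z) +
            ((S y z x - S y x z) + T (T y z) x) +
            ((S z x y - S z y x) + T (T z x) y))) →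
      ∀ x y z : V,
        (Rbar x y z + T (T x y) z) + (Rbar y z x + T (T y z) x) +
          (Rbar z x y + T (T z x) y) = 0) :=
  simplified_first_bianchi_general η T hAK S hSskew hSAK hsym
end

section
/- Let η be a torsion-type tensor on (V,J) satisfying the almost Kähler condition, and suppose V = V₀ ⊕ V₁ ⊕ H is an orthogonal direct sum of J-invariant subspaces such that: H = {v ∈ V : η_v = 0} (H is the Kähler nullity of η); η_v w ∈ H for all v,w ∈ V₁; and η_v w = 0 for all v ∈ V₁, w ∈ V₀. Then V₁ = span{η_v x : v ∈ V₁, x ∈ H}. (This is the algebraic form of the first assertion of Corollary 4.1: η_{V₁}H = V₁.) -/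
open scoped InnerProductSpace

/-- Algebraic form of the first assertion of Corollary 4.1. For an
orthogonal J-invariant splitting `V = V₀ ⊕ V₁ ⊕ H` with `H` the Kähler nullity,
`η_{V₁} V₁ ⊆ H` and `η_{V₁} V₀ = 0`, one has `V₁ = span (η_{V₁} H)`. -/
theorem eta_V1_H_eq_V1
    {V : Type*} [NormedAddCommGroup V] [InnerProductSpace ℝ V] [FiniteDimensional ℝ V]
    (J : V →ₗ[ℝ] V)
    (hJiso : ∀ x y : V, ⟪J x, J y⟫_ℝ = ⟪x, y⟫_ℝ)
    (hJJ : ∀ x : V, J (J x) = -x)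
    (η : V →ₗ[ℝ] V →ₗ[ℝ] V)
    (hskew : ∀ x y z : V, ⟪η x y, z⟫_ℝ = -⟪y, η x z⟫_ℝ)
    (hanti : ∀ x y : V, η x (J y) = -J (η x y))
    (T : V → V → V) (hT : ∀ x y : V, T x y = η x y - η y x)
    (hAK : ∀ x y z : V, ⟪T x y, z⟫_ℝ = -⟪η z x, y⟫_ℝ)
    (V₀ V₁ H : Submodule ℝ V)
    (horth01 : ∀ v ∈ V₀, ∀ w ∈ V₁, ⟪v, w⟫_ℝ = 0)
    (horth0H : ∀ v ∈ V₀, ∀ x ∈ H, ⟪v, x⟫_ℝ = 0)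
    (horth1H : ∀ v ∈ V₁, ∀ x ∈ H, ⟪v, x⟫_ℝ = 0)
    (hspan : V₀ ⊔ V₁ ⊔ H = ⊤)
    (hJ0 : ∀ v ∈ V₀, J v ∈ V₀)
    (hJ1 : ∀ v ∈ V₁, J v ∈ V₁)
    (hJH : ∀ x ∈ H, J x ∈ H)
    (hH : ∀ v : V, v ∈ H ↔ ∀ y : V, η v y = 0)
    (hV1V1 : ∀ v ∈ V₁, ∀ w ∈ V₁, η v w ∈ H)
    (hV1V0 : ∀ v ∈ V₁, ∀ w ∈ V₀, η v w = 0) :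
    V₁ = Submodule.span ℝ {u : V | ∃ v ∈ V₁, ∃ x ∈ H, u = η v x} := by
  set S := Submodule.span ℝ {u : V | ∃ v ∈ V₁, ∃ x ∈ H, u = η v x} with hSdef
  have hHeta : ∀ x ∈ H, ∀ y : V, η x y = 0 := fun x hx y => (hH x).mp hx y
  -- key symmetry identity from almost Kähler condition, for x ∈ H
  have key : ∀ x ∈ H, ∀ y z : V, ⟪η y x, z⟫_ℝ = ⟪η z x, y⟫_ℝ := by
    intro x hx y z
    have h := hAK x y z
    rw [hT, hHeta x hx y, zero_sub, inner_neg_left] at h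
    linarith
  -- membership criterion for V₁
  have hmemV1 : ∀ u : V, (∀ v ∈ V₀, ⟪u, v⟫_ℝ = 0) → (∀ x ∈ H, ⟪u, x⟫_ℝ = 0) →
      u ∈ V₁ := by
    intro u h0 hh
    have hu : u ∈ V₀ ⊔ V₁ ⊔ H := hspan ▸ Submodule.mem_top
    obtain ⟨p, hp, c, hc, rfl⟩ := Submodule.mem_sup.mp hu
    obtain ⟨a, ha, b, hb, rfl⟩ := Submodule.mem_sup.mp hp
    have ha0 : a = 0 := by
      have h1 : ⟪a + b + c, a⟫_ℝ = ⟪a, a⟫_ℝ := by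
        rw [inner_add_left, inner_add_left, real_inner_comm a b, real_inner_comm a c,
          horth01 a ha b hb, horth0H a ha c hc]
        ring
      have h2 := h0 a ha
      rw [h1] at h2
      exact inner_self_eq_zero.mp h2
    have hc0 : c = 0 := by
      have h1 : ⟪a + b + c, c⟫_ℝ = ⟪c, c⟫_ℝ := by
        rw [inner_add_left, inner_add_left, horth0H a ha c hc, horth1H b hb c hc]
        ring
      have h2 := hh c hc
      rw [h1] at h2
      exact inner_self_eq_zero.mp h2
    simpa [ha0, hc0] using hb
  -- S ≤ V₁
  have hSle : S ≤ V₁ := by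
    rw [hSdef, Submodule.span_le]
    rintro u ⟨v, hv, x, hx, rfl⟩
    apply hmemV1
    · intro w hw
      rw [hskew, hV1V0 v hv w hw, inner_zero_right, neg_zero]
    · intro y hy
      rw [key x hx v y, hHeta y hy x, inner_zero_left]
  -- reverse inclusion
  refine le_antisymm ?_ hSle
  intro w hw
  have hsup : S ⊔ Sᗮ = ⊤ := Submodule.sup_orthogonal_of_hasOrthogonalProjection
  have hwmem : w ∈ S ⊔ Sᗮ := hsup ▸ Submodule.mem_top
  obtain ⟨s, hs, t, ht, rfl⟩ := Submodule.mem_sup.mp hwmem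
  have htV1 : t ∈ V₁ := by
    have : t = (s + t) - s := by abel
    rw [this]
    exact Submodule.sub_mem _ hw (hSle hs)
  have ht_orth : ∀ v ∈ V₁, ∀ x ∈ H, ⟪η v x, t⟫_ℝ = 0 := by
    intro v hv x hx
    exact ht (η v x) (Submodule.subset_span ⟨v, hv, x, hx, rfl⟩)
  -- Step A: η t x = 0 for x ∈ H
  have stepA : ∀ x ∈ H, η t x = 0 := by
    intro x hx
    have hz : ∀ z : V, ⟪η t x, z⟫_ℝ = 0 := by
      intro z
      have hzmem : z ∈ V₀ ⊔ V₁ ⊔ H := hspan ▸ Submodule.mem_top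
      obtain ⟨p, hp, c, hc, rfl⟩ := Submodule.mem_sup.mp hzmem
      obtain ⟨a, ha, b, hb, rfl⟩ := Submodule.mem_sup.mp hp
      have h1 : ⟪η t x, a⟫_ℝ = 0 := by
        rw [hskew, hV1V0 t htV1 a ha, inner_zero_right, neg_zero]
      have h2 : ⟪η t x, b⟫_ℝ = 0 := by
        rw [key x hx t b]
        exact ht_orth b hb x hx
      have h3 : ⟪η t x, c⟫_ℝ = 0 := by
        rw [key x hx t c, hHeta c hc x, inner_zero_left]
      rw [inner_add_right, inner_add_right, h1, h2, h3]
      ring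
    have := hz (η t x)
    exact inner_self_eq_zero.mp this
  -- Step B: η t y = 0 for all y
  have stepB : ∀ y : V, η t y = 0 := by
    intro y
    have hymem : y ∈ V₀ ⊔ V₁ ⊔ H := hspan ▸ Submodule.mem_top
    obtain ⟨p, hp, c, hc, rfl⟩ := Submodule.mem_sup.mp hymem
    obtain ⟨a, ha, b, hb, rfl⟩ := Submodule.mem_sup.mp hp
    have h1 : η t a = 0 := hV1V0 t htV1 a ha
    have h3 : η t c = 0 := stepA c hc
    have h2 : η t b = 0 := by
      have hmem : η t b ∈ H := hV1V1 t htV1 b hb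
      have : ⟪η t b, η t b⟫_ℝ = 0 := by
        rw [hskew, stepA (η t b) hmem, inner_zero_right, neg_zero]
      exact inner_self_eq_zero.mp this
    rw [map_add, map_add, h1, h2, h3]
    simp
  have htH : t ∈ H := (hH t).mpr stepB
  have ht0 : t = 0 := inner_self_eq_zero.mp (horth1H t htV1 t htH)
  rw [ht0, add_zero]
  exact hs
end

section
/- Let η be a quasi-Kähler torsion-type tensor on (V,J) satisfying the almost Kähler condition, let V = D₁ ⊕ D₂ be an orthogonal direct sum of J-invariant subspaces, and let R̄ : V×V → End(V) be a bilinear map such that: each R̄(x,y) is skew-symmetric and commutes with J; R̄(x,y)(D_i) ⊆ D_i for i = 1,2 and all x,y ∈ V; and the simplified first Bianchi identity σ_{x,y,z}[R̄(x,y)z + T_{T_x y} z] = 0 holds for all x,y,z ∈ V. Then: (i) η_v(T_x y) = 0 for all v ∈ D₁ and x,y ∈ D₂; and (ii) ⟨R̄(v,w)x, y⟩ = −⟨T_{T_w x} v + T_{T_x v} w, y⟩ for all v,w ∈ D₁ and x,y ∈ D₂. (This is the algebraic form of Lemma 4.4 for an AK₃-manifold with a ∇̄-parallel orthogonal J-invariant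 splitting TM = D₁ ⊕ D₂, R̄ being the curvature of the first canonical Hermitian connection.) -/
/-!
Pair the Bianchi identity at `(x, y, z)` with `v` and at `(x, y, J z)` with `J v`. When
`x, y` lie in an `R̄`-invariant subspace `W` and `v, J v ∈ Wᗮ`, only `R̄(x,y)z` survives among
the curvature terms, and it is the same in both pairings; so are the two cyclic torsion terms,
whereas `T_{T_x y} z` changes sign. Hence `⟪T_{T_x y} z, v⟫ = 0` for all `z`. For `W = D₂` the
almost Kähler condition turns this into `η_v (T_x y) = 0`; for `W = D₁` it kills the middle torsion
term of the Bianchi identity at `(x, v, w)` paired with `y ∈ D₂`, which gives (ii).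
-/

open scoped InnerProductSpace

section ComplexStructure

variable {V : Type*} [AddCommGroup V] [Module ℝ V] {J : V →ₗ[ℝ] V}
  {η : V →ₗ[ℝ] V →ₗ[ℝ] V} {T : V → V → V}

theorem eta_J_left (hJJ : ∀ x, J (J x) = -x) (hanti : ∀ x y, η x (J y) = -J (η x y))
    (hQK : ∀ x y, η (J x) (J y) = -η x y) (a b : V) : η (J a) b = -J (η a b) := by
  have hb : b = J (-J b) := by rw [map_neg, hJJ, neg_neg]
  rw [hb, hQK, map_neg, neg_neg, hanti, ← hb]

theorem torsion_J_left (hJJ : ∀ x, J (J x) = -x) (hanti : ∀ x y, η x (J y) = -J (η x y))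
    (hQK : ∀ x y, η (J x) (J y) = -η x y) (hT : ∀ x y, T x y = η x y - η y x) (a b : V) :
    T (J a) b = -J (T a b) := by
  rw [hT, hT, eta_J_left hJJ hanti hQK, hanti, map_sub]
  abel

theorem torsion_J_right (hJJ : ∀ x, J (J x) = -x) (hanti : ∀ x y, η x (J y) = -J (η x y))
    (hQK : ∀ x y, η (J x) (J y) = -η x y) (hT : ∀ x y, T x y = η x y - η y x) (a b : V) :
    T a (J b) = -J (T a b) := by
  rw [hT, hT, eta_J_left hJJ hanti hQK, hanti, map_sub]
  abel

theorem torsion_neg_left (hJJ : ∀ x, J (J x) = -x) (hTl : ∀ a b, T (J a) b = -J (T a b))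
    (a b : V) : T (-a) b = -T a b := by
  rw [← hJJ, hTl, hTl, map_neg, neg_neg, hJJ]

end ComplexStructure

theorem inner_torsion_torsion_eq_zero_of_mem_orthogonal {V : Type*} [NormedAddCommGroup V]
    [InnerProductSpace ℝ V] {J : V →ₗ[ℝ] V} {T : V → V → V} {R : V →ₗ[ℝ] V →ₗ[ℝ] V →ₗ[ℝ] V}
    (hJiso : ∀ x y, ⟪J x, J y⟫_ℝ = ⟪x, y⟫_ℝ) (hJJ : ∀ x, J (J x) = -x)
    (hTl : ∀ a b, T (J a) b = -J (T a b)) (hTr : ∀ a b, T a (J b) = -J (T a b))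
    (hRJ : ∀ x y z, R x y (J z) = J (R x y z))
    (hBianchi : ∀ x y z, (R x y z + T (T x y) z) + (R y z x + T (T y z) x) +
      (R z x y + T (T z x) y) = 0)
    (W : Submodule ℝ V) (hRW : ∀ a b, ∀ u ∈ W, R a b u ∈ W) {x y v : V} (hx : x ∈ W)
    (hy : y ∈ W) (hv : v ∈ Wᗮ) (hJv : J v ∈ Wᗮ) (z : V) : ⟪T (T x y) z, v⟫_ℝ = 0 := by
  have hR : ∀ a b, ∀ u ∈ W, ∀ w ∈ Wᗮ, ⟪R a b u, w⟫_ℝ = 0 := fun a b u hu _ hw =>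
    Submodule.inner_right_of_mem_orthogonal (hRW a b u hu) hw
  have hpair : ⟪R x y z, v⟫_ℝ + ⟪T (T x y) z, v⟫_ℝ + ⟪T (T y z) x, v⟫_ℝ
      + ⟪T (T z x) y, v⟫_ℝ = 0 := by
    have h := congrArg (⟪·, v⟫_ℝ) (hBianchi x y z)
    simp only [inner_add_left, inner_zero_left, hR _ _ _ hx _ hv, hR _ _ _ hy _ hv] at h
    linarith
  have hpairJ : ⟪R x y z, v⟫_ℝ - ⟪T (T x y) z, v⟫_ℝ + ⟪T (T y z) x, v⟫_ℝ
      + ⟪T (T z x) y, v⟫_ℝ = 0 := by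
    have h := congrArg (⟪·, J v⟫_ℝ) (hBianchi x y (J z))
    simp only [inner_add_left, inner_zero_left, hR _ _ _ hx _ hJv, hR _ _ _ hy _ hJv, hRJ, hTr, hTl,
      torsion_neg_left hJJ hTl, neg_neg, inner_neg_left, hJiso] at h
    linarith
  linarith

theorem lemma_4_4_general
    {V : Type*} [NormedAddCommGroup V] [InnerProductSpace ℝ V]
    (J : V →ₗ[ℝ] V)
    (hJiso : ∀ x y : V, ⟪J x, J y⟫_ℝ = ⟪x, y⟫_ℝ)
    (hJJ : ∀ x : V, J (J x) = -x)
    (η : V →ₗ[ℝ] V →ₗ[ℝ] V)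
    (hanti : ∀ x y : V, η x (J y) = -J (η x y))
    (hQK : ∀ x y : V, η (J x) (J y) = -η x y)
    (T : V → V → V) (hT : ∀ x y : V, T x y = η x y - η y x)
    (hAK : ∀ x y z : V, ⟪T x y, z⟫_ℝ = -⟪η z x, y⟫_ℝ)
    (D₁ D₂ : Submodule ℝ V)
    (horth : ∀ v ∈ D₁, ∀ w ∈ D₂, ⟪v, w⟫_ℝ = 0)
    (hJ1 : ∀ v ∈ D₁, J v ∈ D₁)
    (hJ2 : ∀ v ∈ D₂, J v ∈ D₂)
    (Rbar : V →ₗ[ℝ] V →ₗ[ℝ] V →ₗ[ℝ] V)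
    (hRJ : ∀ x y z : V, Rbar x y (J z) = J (Rbar x y z))
    (hRD1 : ∀ x y : V, ∀ v ∈ D₁, Rbar x y v ∈ D₁)
    (hRD2 : ∀ x y : V, ∀ v ∈ D₂, Rbar x y v ∈ D₂)
    (hBianchi : ∀ x y z : V,
      (Rbar x y z + T (T x y) z) + (Rbar y z x + T (T y z) x) +
        (Rbar z x y + T (T z x) y) = 0) :
    (∀ v ∈ D₁, ∀ x ∈ D₂, ∀ y ∈ D₂, η v (T x y) = 0) ∧
    (∀ v ∈ D₁, ∀ w ∈ D₁, ∀ x ∈ D₂, ∀ y ∈ D₂,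
      ⟪Rbar v w x, y⟫_ℝ = -⟪T (T w x) v + T (T x v) w, y⟫_ℝ) := by
  have key := inner_torsion_torsion_eq_zero_of_mem_orthogonal hJiso hJJ
    (torsion_J_left hJJ hanti hQK hT) (torsion_J_right hJJ hanti hQK hT) hRJ hBianchi
  have hD₁ : ∀ v ∈ D₁, v ∈ D₂ᗮ := fun v hv w hw => real_inner_comm v w ▸ horth v hv w hw
  have hD₂ : ∀ w ∈ D₂, w ∈ D₁ᗮ := fun w hw v hv => horth v hv w hw
  refine ⟨fun v hv x hx y hy => ?_, fun v hv w hw x hx y hy => ?_⟩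
  · have h := hAK (T x y) (η v (T x y)) v
    rwa [key D₂ hRD2 hx hy (hD₁ v hv) (hD₁ _ (hJ1 v hv)), eq_comm, neg_eq_zero,
      inner_self_eq_zero] at h
  · have h := congrArg (⟪·, y⟫_ℝ) (hBianchi x v w)
    simp only [inner_add_left, inner_zero_left, horth _ (hRD1 x v w hw) y hy,
      horth _ (hRD1 w x v hv) y hy, key D₁ hRD1 hv hw (hD₂ y hy) (hD₂ _ (hJ2 y hy)) x] at h
    rw [inner_add_left]
    linarith

/-- Algebraic form of Lemma 4.4. For an orthogonal J-invariant splitting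
`V = D₁ ⊕ D₂` preserved by a curvature-type map R̄ satisfying the simplified first
Bianchi identity, one has (i) `η_v (T x y) = 0` for `v ∈ D₁`, `x, y ∈ D₂`, and
(ii) `⟪R̄(v,w) x, y⟫ = -⟪T (T w x) v + T (T x v) w, y⟫` for `v, w ∈ D₁`, `x, y ∈ D₂`. -/
theorem lemma_4_4
    {V : Type*} [NormedAddCommGroup V] [InnerProductSpace ℝ V] [FiniteDimensional ℝ V]
    (J : V →ₗ[ℝ] V)
    (hJiso : ∀ x y : V, ⟪J x, J y⟫_ℝ = ⟪x, y⟫_ℝ)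
    (hJJ : ∀ x : V, J (J x) = -x)
    (η : V →ₗ[ℝ] V →ₗ[ℝ] V)
    (hskew : ∀ x y z : V, ⟪η x y, z⟫_ℝ = -⟪y, η x z⟫_ℝ)
    (hanti : ∀ x y : V, η x (J y) = -J (η x y))
    (hQK : ∀ x y : V, η (J x) (J y) = -η x y)
    (T : V → V → V) (hT : ∀ x y : V, T x y = η x y - η y x)
    (hAK : ∀ x y z : V, ⟪T x y, z⟫_ℝ = -⟪η z x, y⟫_ℝ)
    (D₁ D₂ : Submodule ℝ V)
    (horth : ∀ v ∈ D₁, ∀ w ∈ D₂, ⟪v, w⟫_ℝ = 0)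
    (hspan : D₁ ⊔ D₂ = ⊤)
    (hJ1 : ∀ v ∈ D₁, J v ∈ D₁)
    (hJ2 : ∀ v ∈ D₂, J v ∈ D₂)
    (Rbar : V →ₗ[ℝ] V →ₗ[ℝ] V →ₗ[ℝ] V)
    (hRskew : ∀ x y z u : V, ⟪Rbar x y z, u⟫_ℝ = -⟪z, Rbar x y u⟫_ℝ)
    (hRJ : ∀ x y z : V, Rbar x y (J z) = J (Rbar x y z))
    (hRD1 : ∀ x y : V, ∀ v ∈ D₁, Rbar x y v ∈ D₁)
    (hRD2 : ∀ x y : V, ∀ v ∈ D₂, Rbar x y v ∈ D₂)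
    (hBianchi : ∀ x y z : V,
      (Rbar x y z + T (T x y) z) + (Rbar y z x + T (T y z) x) +
        (Rbar z x y + T (T z x) y) = 0) :
    (∀ v ∈ D₁, ∀ x ∈ D₂, ∀ y ∈ D₂, η v (T x y) = 0) ∧
    (∀ v ∈ D₁, ∀ w ∈ D₁, ∀ x ∈ D₂, ∀ y ∈ D₂,
      ⟪Rbar v w x, y⟫_ℝ = -⟪T (T w x) v + T (T x v) w, y⟫_ℝ) :=
  lemma_4_4_general J hJiso hJJ η hanti hQK T hT hAK D₁ D₂ horth hJ1 hJ2 Rbar hRJ hRD1 hRD2 hBianchi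
end

section
/- Let η be a torsion-type tensor on (V,J) satisfying the almost Kähler condition, and suppose V = V₀ ⊕ V₁ ⊕ H is an orthogonal direct sum of J-invariant subspaces such that: H = {v ∈ V : η_v = 0}; T_v w ∈ V₀ for all v,w ∈ V₀; and η_v w = 0 for all v ∈ V₀, w ∈ V₁. Then every e ∈ V₀ that is orthogonal to η_v x for all v ∈ V₀ and x ∈ H satisfies η_e x = 0 for all x ∈ H. (This is equation (4.4) in the proof of Lemma 4.6: for the splitting V₀ = E₁ ⊕ E₂ with E₂ = η_{V₀}H, one has η_{E₁}H = 0.) -/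
open scoped InnerProductSpace

/-! For `x` in the nullity, `η_x = 0` turns the almost Kähler condition into
`⟪η_e x, z⟫ = -⟪η_z e, x⟫`. This vanishes for `z ∈ V₀` because `e ⊥ η_z x`, for `z ∈ V₁` because
then `η_z e = T_z e` (as `η_e z = 0`) and `⟪T_z e, x⟫ = -⟪η_x z, e⟫ = 0`, and for `z ∈ H`
trivially. Since `V₀ ⊕ V₁ ⊕ H = V`, the vector `η_e x` is orthogonal to everything. -/

section AlmostKahler

variable {V : Type*} [NormedAddCommGroup V] [InnerProductSpace ℝ V]
  {η : V →ₗ[ℝ] V →ₗ[ℝ] V} {T : V → V → V}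

theorem inner_torsion_eq_zero_of_eta_eq_zero
    (hAK : ∀ x y z : V, ⟪T x y, z⟫_ℝ = -⟪η z x, y⟫_ℝ) {x : V} (hx : η x = 0) (a b : V) :
    ⟪T a b, x⟫_ℝ = 0 := by
  simp [hAK, hx]

theorem inner_eta_eq_neg_inner_eta_of_eta_eq_zero (hT : ∀ x y : V, T x y = η x y - η y x)
    (hAK : ∀ x y z : V, ⟪T x y, z⟫_ℝ = -⟪η z x, y⟫_ℝ) {x : V} (hx : η x = 0) (e z : V) :
    ⟪η e x, z⟫_ℝ = -⟪η z e, x⟫_ℝ := by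
  rw [← hAK, hT, hx, LinearMap.zero_apply, sub_zero]

end AlmostKahler

theorem eta_E1_H_eq_zero_general
    {V : Type*} [NormedAddCommGroup V] [InnerProductSpace ℝ V]
    (η : V →ₗ[ℝ] V →ₗ[ℝ] V)
    (hskew : ∀ x y z : V, ⟪η x y, z⟫_ℝ = -⟪y, η x z⟫_ℝ)
    (T : V → V → V) (hT : ∀ x y : V, T x y = η x y - η y x)
    (hAK : ∀ x y z : V, ⟪T x y, z⟫_ℝ = -⟪η z x, y⟫_ℝ)
    (V₀ V₁ H : Submodule ℝ V)
    (hspan : V₀ ⊔ V₁ ⊔ H = ⊤)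
    (hH : ∀ v : V, v ∈ H ↔ ∀ y : V, η v y = 0)
    (hV0V1 : ∀ v ∈ V₀, ∀ w ∈ V₁, η v w = 0) :
    ∀ e ∈ V₀, (∀ v ∈ V₀, ∀ x ∈ H, ⟪e, η v x⟫_ℝ = 0) →
      ∀ x ∈ H, η e x = 0 := by
  intro e he heorth x hx
  have hnull : ∀ y ∈ H, η y = 0 := fun y hy => LinearMap.ext ((hH y).mp hy)
  have key := inner_eta_eq_neg_inner_eta_of_eta_eq_zero hT hAK (hnull x hx) e
  suffices (ℝ ∙ η e x)ᗮ = ⊤ by simpa [Submodule.orthogonal_eq_top_iff] using this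
  rw [eq_top_iff, ← hspan]
  refine sup_le (sup_le ?_ ?_) ?_ <;> intro z hz <;>
    rw [Submodule.mem_orthogonal_singleton_iff_inner_right, key, neg_eq_zero]
  · rw [hskew, neg_eq_zero]
    exact heorth z hz x hx
  · simpa [hT, hV0V1 e he z hz] using inner_torsion_eq_zero_of_eta_eq_zero hAK (hnull x hx) z e
  · simp [hnull z hz]

/-- Equation (4.4) in the proof of Lemma 4.6. For an orthogonal
J-invariant splitting `V = V₀ ⊕ V₁ ⊕ H` with `H` the Kähler nullity,
`T(V₀,V₀) ⊆ V₀` and `η_{V₀} V₁ = 0`, any `e ∈ V₀` orthogonal to `η_{V₀} H`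
satisfies `η_e H = 0`. -/
theorem eta_E1_H_eq_zero
    {V : Type*} [NormedAddCommGroup V] [InnerProductSpace ℝ V] [FiniteDimensional ℝ V]
    (J : V →ₗ[ℝ] V)
    (hJiso : ∀ x y : V, ⟪J x, J y⟫_ℝ = ⟪x, y⟫_ℝ)
    (hJJ : ∀ x : V, J (J x) = -x)
    (η : V →ₗ[ℝ] V →ₗ[ℝ] V)
    (hskew : ∀ x y z : V, ⟪η x y, z⟫_ℝ = -⟪y, η x z⟫_ℝ)
    (hanti : ∀ x y : V, η x (J y) = -J (η x y))
    (T : V → V → V) (hT : ∀ x y : V, T x y = η x y - η y x)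
    (hAK : ∀ x y z : V, ⟪T x y, z⟫_ℝ = -⟪η z x, y⟫_ℝ)
    (V₀ V₁ H : Submodule ℝ V)
    (horth01 : ∀ v ∈ V₀, ∀ w ∈ V₁, ⟪v, w⟫_ℝ = 0)
    (horth0H : ∀ v ∈ V₀, ∀ x ∈ H, ⟪v, x⟫_ℝ = 0)
    (horth1H : ∀ v ∈ V₁, ∀ x ∈ H, ⟪v, x⟫_ℝ = 0)
    (hspan : V₀ ⊔ V₁ ⊔ H = ⊤)
    (hJ0 : ∀ v ∈ V₀, J v ∈ V₀)
    (hJ1 : ∀ v ∈ V₁, J v ∈ V₁)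
    (hJH : ∀ x ∈ H, J x ∈ H)
    (hH : ∀ v : V, v ∈ H ↔ ∀ y : V, η v y = 0)
    (hTV0 : ∀ v ∈ V₀, ∀ w ∈ V₀, T v w ∈ V₀)
    (hV0V1 : ∀ v ∈ V₀, ∀ w ∈ V₁, η v w = 0) :
    ∀ e ∈ V₀, (∀ v ∈ V₀, ∀ x ∈ H, ⟪e, η v x⟫_ℝ = 0) →
      ∀ x ∈ H, η e x = 0 :=
  eta_E1_H_eq_zero_general η hskew T hT hAK V₀ V₁ H hspan hH hV0V1
end

section
/- Let η be a quasi-Kähler torsion-type tensor on (V,J), let W ⊆ V be a J-invariant subspace with η_v w ∈ W for all v,w ∈ W, let λ be a nonzero real number, and let ρ : V → V be a linear map such that ρ(u) = λ J(u) for every u ∈ W and ρ(η_v w) = η_{ρ(v)} w + η_v(ρ(w)) for all v,w ∈ W. Then η_v w = 0 for all v,w ∈ W. (This is the key step in the proof of Theorem 1.1, applied to the partial Hermitian Ricci tensor ρ̄ acting as λJ on the eigenspace W₁, which forces η_{W₁}W₁ = 0 and hence the vanishing of W₁.) -/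
/-!
On `W` the derivation identity for `ρ = λ J`, together with `η_x ∘ J = -J ∘ η_x`, reads
`λ J(η_v w) = λ η_{Jv} w - λ J(η_v w)`, i.e. `η_{Jv} w = 2 J(η_v w)`. Applying this twice,
`-η_v w = η_{J(Jv)} w = 2 J(2 J(η_v w)) = -4 η_v w`, so `3 η_v w = 0`.
-/

open scoped InnerProductSpace

section

variable {K V : Type*} [Field K] [AddCommGroup V] [Module K V]

theorem map_J_left_eq_two_smul_J_of_derivation (J ρ : V →ₗ[K] V) (η : V →ₗ[K] V →ₗ[K] V)
    {lam : K} (hlam : lam ≠ 0) {v w : V} (hanti : η v (J w) = -J (η v w))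
    (hρv : ρ v = lam • J v) (hρw : ρ w = lam • J w) (hρη : ρ (η v w) = lam • J (η v w))
    (hder : ρ (η v w) = η (ρ v) w + η v (ρ w)) :
    η (J v) w = (2 : K) • J (η v w) := by
  rw [hρη, hρv, hρw, map_smul, map_smul, LinearMap.smul_apply, hanti] at hder
  have h : lam • ((2 : K) • J (η v w)) = lam • η (J v) w := by
    linear_combination (norm := module) hder
  exact (smul_right_injective V hlam h).symm

theorem eq_zero_of_map_J_eq_two_smul_J (J A : V →ₗ[K] V) (hJJ : ∀ x, J (J x) = -x)
    (h3 : (3 : K) ≠ 0) {v : V} (hv : A (J v) = (2 : K) • J (A v))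
    (hJv : A (J (J v)) = (2 : K) • J (A (J v))) :
    A v = 0 := by
  rw [hJJ, map_neg, hv, map_smul, hJJ] at hJv
  have h : (3 : K) • A v = 0 := by linear_combination (norm := module) hJv
  exact (smul_eq_zero.mp h).resolve_left h3

end

theorem eta_vanishes_on_eigenspace_general
    {V : Type*} [NormedAddCommGroup V] [InnerProductSpace ℝ V]
    (J : V →ₗ[ℝ] V)
    (hJJ : ∀ x : V, J (J x) = -x)
    (η : V →ₗ[ℝ] V →ₗ[ℝ] V)
    (hanti : ∀ x y : V, η x (J y) = -J (η x y))
    (W : Submodule ℝ V)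
    (hJW : ∀ v ∈ W, J v ∈ W)
    (hetaW : ∀ v ∈ W, ∀ w ∈ W, η v w ∈ W)
    (lam : ℝ) (hlam : lam ≠ 0)
    (ρ : V →ₗ[ℝ] V)
    (hρW : ∀ u ∈ W, ρ u = lam • J u)
    (hρder : ∀ v ∈ W, ∀ w ∈ W, ρ (η v w) = η (ρ v) w + η v (ρ w)) :
    ∀ v ∈ W, ∀ w ∈ W, η v w = 0 := by
  intro v hv w hw
  have key : ∀ u ∈ W, η.flip w (J u) = (2 : ℝ) • J (η.flip w u) := fun u hu =>
    map_J_left_eq_two_smul_J_of_derivation J ρ η hlam (hanti u w) (hρW u hu) (hρW w hw)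
      (hρW _ (hetaW u hu w hw)) (hρder u hu w hw)
  exact eq_zero_of_map_J_eq_two_smul_J J (η.flip w) hJJ three_ne_zero (key v hv)
    (key (J v) (hJW v hv))

/-- Key step in the proof of Theorem 1.1. If a quasi-Kähler torsion-type
tensor η preserves a J-invariant subspace W, and a linear map ρ acts as `λ • J` on W
and is a derivation of η on W, with `λ ≠ 0`, then `η v w = 0` for all `v, w ∈ W`. -/
theorem eta_vanishes_on_eigenspace
    {V : Type*} [NormedAddCommGroup V] [InnerProductSpace ℝ V] [FiniteDimensional ℝ V]
    (J : V →ₗ[ℝ] V)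
    (hJiso : ∀ x y : V, ⟪J x, J y⟫_ℝ = ⟪x, y⟫_ℝ)
    (hJJ : ∀ x : V, J (J x) = -x)
    (η : V →ₗ[ℝ] V →ₗ[ℝ] V)
    (hskew : ∀ x y z : V, ⟪η x y, z⟫_ℝ = -⟪y, η x z⟫_ℝ)
    (hanti : ∀ x y : V, η x (J y) = -J (η x y))
    (hQK : ∀ x y : V, η (J x) (J y) = -η x y)
    (W : Submodule ℝ V)
    (hJW : ∀ v ∈ W, J v ∈ W)
    (hetaW : ∀ v ∈ W, ∀ w ∈ W, η v w ∈ W)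
    (lam : ℝ) (hlam : lam ≠ 0)
    (ρ : V →ₗ[ℝ] V)
    (hρW : ∀ u ∈ W, ρ u = lam • J u)
    (hρder : ∀ v ∈ W, ∀ w ∈ W, ρ (η v w) = η (ρ v) w + η v (ρ w)) :
    ∀ v ∈ W, ∀ w ∈ W, η v w = 0 :=
  eta_vanishes_on_eigenspace_general J hJJ η hanti W hJW hetaW lam hlam ρ hρW hρder
end
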